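/- arXiv:1912.02266 — 2 statements merged into one kernel-verified Lean document; each statement's English description precedes it below -/
import Mathlib

section
/- Let r ≥ 3, let ℓ ≥ 0, and let I = {i_1 < i_2 < ⋯ < i_ℓ} be a set of nonconsecutive integers with 1 < i_1 and i_ℓ < r (so i_{j+1} ≥ i_j + 2 for all j), and let c_{i_1},…,c_{i_ℓ} be positive integers. Let ξ ∈ ℕ^r be the vector whose i_j-th coordinate is 1 + c_{i_j} for each j and whose other coordinates are 1 (that is, ξ = Σ_{i=1}^r α_i + Σ_{j=1}^ℓ c_{i_j} α_{i_j}). Set m = Σ_{j=1}^ℓ c_{i_j}. Then, as polynomials in ℤ[q], Σ_{k≥0} N_k(ξ)·q^k = q^{m+1}·(1+q)^{r−1−2ℓ}·(2+2q+q²)^ℓ. -/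
open Polynomial

/-- The positive roots of the Lie algebra of type `A_r` in simple-root coordinates:
the indicator vectors `α[i,j]` of the intervals `[i,j]` for `1 ≤ i ≤ j ≤ r`
(positions are `1`-based, so position `i` corresponds to `t : Fin r` with `t.val + 1 = i`). -/
def isPosRootA (r : ℕ) (v : Fin r → ℕ) : Prop :=
  ∃ i j : ℕ, 1 ≤ i ∧ i ≤ j ∧ j ≤ r ∧
    v = fun t => if i ≤ t.val + 1 ∧ t.val + 1 ≤ j then 1 else 0

/-- `NA r k ξ` is the number of decompositions of the weight `ξ` as a sum of exactly `k`
positive roots of `A_r`, i.e. the number of `ℕ`-valued functions (with finite support)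
on the set of positive roots whose values sum to `k` and whose weighted vector sum is `ξ`. -/
noncomputable def NA (r k : ℕ) (ξ : Fin r → ℕ) : ℕ :=
  Set.ncard {m : (Fin r → ℕ) →₀ ℕ |
    (∀ v ∈ m.support, isPosRootA r v) ∧
    (m.sum fun _ n => n) = k ∧
    (m.sum fun v n => n • v) = ξ}

/-!
Positions are 0-based, so a decomposition of `ξ` is a multiset of intervals `[a, b] ⊆ [0, r)`.
Since no two adjacent coordinates of `ξ` exceed `1`, at most one interval crosses each boundary
`t - 1 | t` (`L t ∈ {0, 1}`) and at most one passes through each position (`P t ∈ {0, 1}`).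
Conversely `(L, P)` determines the decomposition: the intervals of length `≥ 2` are the maximal runs
of crossed boundaries, cut at the positions not passed through, and singletons fill up the rest;
the number of intervals is `∑ ξ - ∑ L`. Passing is forced where `ξ t = 1`, so the admissible
`(L, P)` factor: each position `i - 1` with `i ∈ I`, together with its two adjacent boundaries,
contributes `1 + 2q⁻¹ + 2q⁻²` (when both boundaries are crossed, the interval may pass through or
not), every other boundary `1 + q⁻¹`, and the total factor `q ^ (r + m)` turns this into
`q^{m+1} (1+q)^{r-1-2ℓ} (2+2q+q²)^ℓ`.
-/

namespace TypeA

open Finset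

lemma le_sum_sum {α β : Type*} {f : α → β → ℕ} {s : Finset α} {t : Finset β} {x : α} {y : β}
    (hx : x ∈ s) (hy : y ∈ t) :
    f x y ≤ ∑ a ∈ s, ∑ b ∈ t, f a b :=
  (single_le_sum (fun _ _ => Nat.zero_le _) hy).trans
    (single_le_sum (f := fun a => ∑ b ∈ t, f a b) (fun _ _ => Nat.zero_le _) hx)

section Intervals

-- `n a b` is the multiplicity of the interval `[a, b]`, i.e. of the root `α[a+1, b+1]`.
variable (r : ℕ) (n : ℕ → ℕ → ℕ)

def coverage (t : ℕ) : ℕ := ∑ a ∈ range (t + 1), ∑ b ∈ Ico t r, n a b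

def crossing (t : ℕ) : ℕ := ∑ a ∈ range t, ∑ b ∈ Ico t r, n a b

def passing (t : ℕ) : ℕ := ∑ a ∈ range t, ∑ b ∈ Ico (t + 1) r, n a b

def size : ℕ := ∑ a ∈ range r, ∑ b ∈ range r, n a b

variable {r n}

lemma coverage_eq_crossing_add (t : ℕ) :
    coverage r n t = crossing r n t + ∑ b ∈ Ico t r, n t b := by
  rw [coverage, crossing, sum_range_succ]

lemma crossing_eq_sum_add_passing {t : ℕ} (ht : t < r) :
    crossing r n t = ∑ a ∈ range t, n a t + passing r n t := by
  simp only [crossing, passing, ← sum_add_distrib, sum_eq_sum_Ico_succ_bot ht]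

lemma crossing_succ_eq_passing_add (t : ℕ) :
    crossing r n (t + 1) = passing r n t + ∑ b ∈ Ico (t + 1) r, n t b := by
  rw [crossing, passing, sum_range_succ]

lemma coverage_add_passing {t : ℕ} (ht : t < r) :
    coverage r n t + passing r n t = n t t + crossing r n t + crossing r n (t + 1) := by
  rw [coverage_eq_crossing_add, crossing_succ_eq_passing_add, sum_eq_sum_Ico_succ_bot ht]
  ring

lemma passing_le_crossing (t : ℕ) : passing r n t ≤ crossing r n t :=
  sum_le_sum fun _ _ => sum_le_sum_of_subset (Ico_subset_Ico_left (Nat.le_succ t))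

lemma passing_le_crossing_succ (t : ℕ) : passing r n t ≤ crossing r n (t + 1) := by
  rw [crossing_succ_eq_passing_add]
  exact Nat.le_add_right _ _

lemma crossing_le_coverage (t : ℕ) : crossing r n t ≤ coverage r n t := by
  rw [coverage_eq_crossing_add]
  exact Nat.le_add_right _ _

lemma crossing_succ_le_coverage (t : ℕ) : crossing r n (t + 1) ≤ coverage r n t :=
  sum_le_sum fun _ _ => sum_le_sum_of_subset (Ico_subset_Ico_left (Nat.le_succ t))

@[simp] lemma crossing_zero : crossing r n 0 = 0 := by
  simp [crossing]

lemma crossing_eq_zero_of_le {t : ℕ} (ht : r ≤ t) : crossing r n t = 0 := by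
  simp [crossing, Ico_eq_empty_of_le ht]

lemma sum_coverage (hsupp : ∀ a b, ¬(a ≤ b ∧ b < r) → n a b = 0) :
    ∑ t ∈ range r, coverage r n t = size r n + ∑ t ∈ range r, crossing r n t := by
  have row : ∀ a ∈ range r, ∑ b ∈ range r, n a b = ∑ b ∈ Ico a r, n a b := by
    intro a _
    refine (sum_subset (fun b hb => ?_) fun b hb hb' => hsupp a b ?_).symm
    · simp only [mem_Ico, mem_range] at hb ⊢
      omega
    · simp only [mem_Ico, mem_range] at hb hb'
      omega
  rw [size, sum_congr rfl row, ← sum_add_distrib]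
  exact sum_congr rfl fun t _ => by rw [coverage_eq_crossing_add, add_comm]

end Intervals

structure IsIntervalDecomp (r : ℕ) (ξ : ℕ → ℕ) (k : ℕ) (n : ℕ → ℕ → ℕ) : Prop where
  support : ∀ a b, ¬(a ≤ b ∧ b < r) → n a b = 0
  coverage_eq : ∀ t < r, coverage r n t = ξ t
  size_eq : size r n = k

lemma IsIntervalDecomp.add_sum_crossing {r k : ℕ} {ξ : ℕ → ℕ} {n : ℕ → ℕ → ℕ}
    (hD : IsIntervalDecomp r ξ k n) :
    k + ∑ t ∈ range r, crossing r n t = ∑ t ∈ range r, ξ t := by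
  rw [← hD.size_eq, ← sum_coverage hD.support]
  exact sum_congr rfl fun t ht => hD.coverage_eq t (mem_range.mp ht)

def intervalVec (r a b : ℕ) : Fin r → ℕ := fun t => if a ≤ t.val ∧ t.val ≤ b then 1 else 0

lemma isPosRootA_iff {r : ℕ} {v : Fin r → ℕ} :
    isPosRootA r v ↔ ∃ a b, a ≤ b ∧ b < r ∧ v = intervalVec r a b := by
  constructor
  · rintro ⟨i, j, h1, h2, h3, rfl⟩
    refine ⟨i - 1, j - 1, by omega, by omega, funext fun t => ?_⟩
    simp only [intervalVec]
    split_ifs <;> omega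
  · rintro ⟨a, b, h1, h2, rfl⟩
    refine ⟨a + 1, b + 1, by omega, by omega, by omega, funext fun t => ?_⟩
    simp only [intervalVec]
    split_ifs <;> omega

lemma intervalVec_inj {r a b a' b' : ℕ} (hab : a ≤ b) (hb : b < r) (hab' : a' ≤ b')
    (hb' : b' < r) (h : intervalVec r a b = intervalVec r a' b') : a = a' ∧ b = b' := by
  have key : ∀ u (hu : u < r), (a ≤ u ∧ u ≤ b ↔ a' ≤ u ∧ u ≤ b') := fun u hu => by
    have := congrFun h ⟨u, hu⟩
    simp only [intervalVec] at this
    split_ifs at this <;> omega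
  have := key a (by omega)
  have := key b (by omega)
  have := key a' (by omega)
  have := key b' (by omega)
  omega

def intervalCoeff (r : ℕ) (m : (Fin r → ℕ) →₀ ℕ) (a b : ℕ) : ℕ :=
  if a ≤ b ∧ b < r then m (intervalVec r a b) else 0

noncomputable def toFinsupp (r : ℕ) (n : ℕ → ℕ → ℕ) : (Fin r → ℕ) →₀ ℕ :=
  ∑ p ∈ range r ×ˢ range r, Finsupp.single (intervalVec r p.1 p.2) (n p.1 p.2)

section ToFinsupp

variable {r : ℕ} {n : ℕ → ℕ → ℕ}

lemma toFinsupp_intervalVec (hsupp : ∀ a b, ¬(a ≤ b ∧ b < r) → n a b = 0) {a b : ℕ}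
    (hab : a ≤ b) (hb : b < r) : toFinsupp r n (intervalVec r a b) = n a b := by
  rw [toFinsupp, Finsupp.finsetSum_apply, sum_eq_single_of_mem (a, b)
    (by simp only [mem_product, mem_range]; omega), Finsupp.single_eq_same]
  rintro ⟨a', b'⟩ hp hne
  simp only [mem_product, mem_range] at hp
  by_cases hab' : a' ≤ b'
  · refine Finsupp.single_eq_of_ne fun h => hne ?_
    obtain ⟨rfl, rfl⟩ := intervalVec_inj hab hb hab' hp.2 h
    rfl
  · simp [hsupp a' b' (by omega)]

lemma exists_intervalVec_of_toFinsupp_ne_zero (hsupp : ∀ a b, ¬(a ≤ b ∧ b < r) → n a b = 0)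
    {v : Fin r → ℕ} (hv : toFinsupp r n v ≠ 0) : ∃ a b, a ≤ b ∧ b < r ∧ v = intervalVec r a b := by
  rw [toFinsupp, Finsupp.finsetSum_apply] at hv
  obtain ⟨⟨a, b⟩, hp, hne⟩ := exists_ne_zero_of_sum_ne_zero hv
  simp only [mem_product, mem_range] at hp
  rw [Finsupp.single_apply] at hne
  split_ifs at hne with h
  · exact ⟨a, b, by by_contra hab; exact hne (hsupp a b (by omega)), hp.2, h.symm⟩
  · exact absurd rfl hne

lemma toFinsupp_sum_count : (toFinsupp r n).sum (fun _ k => k) = size r n := by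
  rw [toFinsupp, ← Finsupp.sum_finsetSum_index (fun _ => rfl) (fun _ _ _ => rfl), size,
    ← sum_product']
  exact sum_congr rfl fun p _ => Finsupp.sum_single_index rfl

lemma toFinsupp_sum_smul :
    (toFinsupp r n).sum (fun v k => k • v) = fun t : Fin r => coverage r n t := by
  rw [toFinsupp, ← Finsupp.sum_finsetSum_index (fun v => zero_smul ℕ v)
    (fun v k l => add_smul k l v)]
  have single (p : ℕ × ℕ) : (Finsupp.single (intervalVec r p.1 p.2) (n p.1 p.2)).sum
      (fun v k => k • v) = n p.1 p.2 • intervalVec r p.1 p.2 :=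
    Finsupp.sum_single_index (zero_smul ℕ _)
  funext t
  simp only [single, Finset.sum_apply, Pi.smul_apply, intervalVec, smul_eq_mul, mul_ite, mul_one,
    mul_zero]
  rw [← sum_filter, coverage, ← sum_product']
  refine sum_congr (ext fun p => ?_) fun _ _ => rfl
  simp only [mem_filter, mem_product, mem_range, mem_Ico]
  omega

lemma toFinsupp_intervalCoeff {m : (Fin r → ℕ) →₀ ℕ} (hm : ∀ v ∈ m.support, isPosRootA r v) :
    toFinsupp r (intervalCoeff r m) = m := by
  have hsupp : ∀ a b, ¬(a ≤ b ∧ b < r) → intervalCoeff r m a b = 0 := fun a b h => if_neg h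
  ext v
  by_cases hv : m v = 0
  · rw [hv]
    by_contra hne
    obtain ⟨a, b, hab, hb, rfl⟩ := exists_intervalVec_of_toFinsupp_ne_zero hsupp hne
    rw [toFinsupp_intervalVec hsupp hab hb, intervalCoeff, if_pos ⟨hab, hb⟩, hv] at hne
    exact hne rfl
  · obtain ⟨a, b, hab, hb, rfl⟩ := isPosRootA_iff.mp (hm v (Finsupp.mem_support_iff.mpr hv))
    rw [toFinsupp_intervalVec hsupp hab hb, intervalCoeff, if_pos ⟨hab, hb⟩]

end ToFinsupp

theorem NA_eq_card (r k : ℕ) (ξ : ℕ → ℕ) :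
    NA r k (fun t => ξ t) = Nat.card {n // IsIntervalDecomp r ξ k n} := by
  refine (Set.ncard_congr (fun n (_ : n ∈ {n | IsIntervalDecomp r ξ k n}) => toFinsupp r n)
    ?_ ?_ ?_).symm
  · intro n hn
    refine ⟨fun v hv => ?_, by rw [toFinsupp_sum_count, hn.size_eq], ?_⟩
    · obtain ⟨a, b, hab, hb, rfl⟩ :=
        exists_intervalVec_of_toFinsupp_ne_zero hn.support (Finsupp.mem_support_iff.mp hv)
      exact isPosRootA_iff.mpr ⟨a, b, hab, hb, rfl⟩
    · rw [toFinsupp_sum_smul]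
      exact funext fun t => hn.coverage_eq t t.isLt
  · intro n n' hn hn' h
    funext a b
    by_cases hab : a ≤ b ∧ b < r
    · rw [← toFinsupp_intervalVec hn.support hab.1 hab.2, h,
        toFinsupp_intervalVec hn'.support hab.1 hab.2]
    · rw [hn.support a b hab, hn'.support a b hab]
  · rintro m ⟨hm, hcount, hsmul⟩
    have key := toFinsupp_intervalCoeff hm
    refine ⟨intervalCoeff r m, ⟨fun a b h => if_neg h, fun t ht => ?_, ?_⟩, key⟩
    · exact congrFun (toFinsupp_sum_smul.symm.trans (key ▸ hsmul)) ⟨t, ht⟩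
    · rw [← toFinsupp_sum_count, key, hcount]

-- The properties of `L = crossing r n` and `P = passing r n` for a decomposition `n` of `ξ`.
structure IsCrossingPattern (r : ℕ) (ξ L P : ℕ → ℕ) : Prop where
  le_one : ∀ t, L t ≤ 1
  zero : L 0 = 0
  eq_zero_of_le : ∀ t, r ≤ t → L t = 0
  passing_le : ∀ t, P t ≤ L t ∧ P t ≤ L (t + 1)
  forced : ∀ t, ξ t ≤ 1 → L t + L (t + 1) ≤ P t + 1

structure IsChain (L P : ℕ → ℕ) (a b : ℕ) : Prop where
  crossing : ∀ g, a < g → g ≤ b → L g = 1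
  left : P a = 0
  right : P b = 0
  pass : ∀ u, a < u → u < b → P u = 1

-- The diagonal entry is the one forced by `coverage_add_passing`.
open Classical in
noncomputable def patternMatrix (r : ℕ) (ξ L P : ℕ → ℕ) (a b : ℕ) : ℕ :=
  if a = b ∧ a < r then ξ a + P a - L a - L (a + 1)
  else if a < b ∧ b < r ∧ IsChain L P a b then 1 else 0

lemma eq_one_of_isChain {r : ℕ} {n : ℕ → ℕ → ℕ} {a b : ℕ} (hab : a < b) (hb : b < r)
    (hch : IsChain (crossing r n) (passing r n) a b) : n a b = 1 := by
  have hstart : ∑ y ∈ Ico (a + 1) r, n a y = 1 := by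
    have := crossing_succ_eq_passing_add (r := r) (n := n) a
    rw [hch.left, hch.crossing (a + 1) (by omega) (by omega)] at this
    omega
  rwa [sum_eq_single_of_mem b (by simp only [mem_Ico]; omega)] at hstart
  intro y hy hyb
  simp only [mem_Ico] at hy
  rcases lt_or_gt_of_ne hyb with hyb | hyb
  · have h1 : n a y ≤ ∑ x ∈ range y, n x y :=
      single_le_sum (f := fun x => n x y) (fun _ _ => Nat.zero_le _)
        (by simp only [mem_range]; omega)
    have h2 := crossing_eq_sum_add_passing (r := r) (n := n) (t := y) (by omega)
    rw [hch.crossing y (by omega) (by omega), hch.pass y (by omega) hyb] at h2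
    omega
  · have : n a y ≤ passing r n b :=
      le_sum_sum (by simp only [mem_range]; omega) (by simp only [mem_Ico]; omega)
    rw [hch.right] at this
    omega

section DecompToPattern

variable {r k : ℕ} {ξ : ℕ → ℕ} {n : ℕ → ℕ → ℕ}
  (hadj : ∀ t, t + 1 < r → ξ t ≤ 1 ∨ ξ (t + 1) ≤ 1) (hD : IsIntervalDecomp r ξ k n)
include hadj hD

lemma crossing_le_one (t : ℕ) : crossing r n t ≤ 1 := by
  rcases t with _ | s
  · simp
  rcases lt_or_ge (s + 1) r with h | h
  · have h1 := hD.coverage_eq s (by omega) ▸ crossing_succ_le_coverage (r := r) (n := n) s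
    have h2 := hD.coverage_eq (s + 1) h ▸ crossing_le_coverage (r := r) (n := n) (s + 1)
    rcases hadj s h with h3 | h3 <;> omega
  · rw [crossing_eq_zero_of_le h]
    omega

lemma isCrossingPattern_of_decomp :
    IsCrossingPattern r ξ (crossing r n) (passing r n) where
  le_one := crossing_le_one hadj hD
  zero := crossing_zero
  eq_zero_of_le _ ht := crossing_eq_zero_of_le ht
  passing_le t := ⟨passing_le_crossing t, passing_le_crossing_succ t⟩
  forced t hξ := by
    rcases lt_or_ge t r with ht | ht
    · have := coverage_add_passing (n := n) ht
      rw [hD.coverage_eq t ht] at this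
      omega
    · rw [crossing_eq_zero_of_le ht, crossing_eq_zero_of_le (by omega)]
      omega

lemma isChain_of_pos {a b : ℕ} (hab : a < b) (hb : b < r) (hpos : 0 < n a b) :
    IsChain (crossing r n) (passing r n) a b where
  crossing g hg hgb := by
    have : n a b ≤ crossing r n g :=
      le_sum_sum (by simp only [mem_range]; omega) (by simp only [mem_Ico]; omega)
    have := crossing_le_one hadj hD g
    omega
  left := by
    have h1 : n a b ≤ ∑ y ∈ Ico (a + 1) r, n a y :=
      single_le_sum (fun _ _ => Nat.zero_le _) (by simp only [mem_Ico]; omega)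
    have h2 := crossing_succ_eq_passing_add (r := r) (n := n) a
    have := crossing_le_one hadj hD (a + 1)
    omega
  right := by
    have h1 : n a b ≤ ∑ x ∈ range b, n x b :=
      single_le_sum (f := fun x => n x b) (fun _ _ => Nat.zero_le _)
        (by simp only [mem_range]; omega)
    have h2 := crossing_eq_sum_add_passing (n := n) hb
    have := crossing_le_one hadj hD b
    omega
  pass u hau hub := by
    have : n a b ≤ passing r n u :=
      le_sum_sum (by simp only [mem_range]; omega) (by simp only [mem_Ico]; omega)
    have := passing_le_crossing (r := r) (n := n) u
    have := crossing_le_one hadj hD u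
    omega

lemma patternMatrix_crossing_passing : patternMatrix r ξ (crossing r n) (passing r n) = n := by
  funext a b
  unfold patternMatrix
  split_ifs with hdiag hchain
  · obtain ⟨rfl, ha⟩ := hdiag
    have := coverage_add_passing (n := n) ha
    rw [hD.coverage_eq a ha] at this
    omega
  · exact (eq_one_of_isChain hchain.1 hchain.2.1 hchain.2.2).symm
  · by_cases hab : a < b ∧ b < r
    · by_contra hne
      exact hchain ⟨hab.1, hab.2, isChain_of_pos hadj hD hab.1 hab.2 (by omega)⟩
    · exact (hD.support a b (by omega)).symm

end DecompToPattern

section PatternToDecomp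

variable {r : ℕ} {ξ L P : ℕ → ℕ}

lemma IsChain.unique {a b a' b' g : ℕ} (h : IsChain L P a b) (h' : IsChain L P a' b')
    (hg : a < g ∧ g ≤ b) (hg' : a' < g ∧ g ≤ b') : a = a' ∧ b = b' := by
  have h1 : ¬a < a' := fun hlt => by
    have := h.pass a' hlt (by omega)
    have := h'.left
    omega
  have h2 : ¬a' < a := fun hlt => by
    have := h'.pass a hlt (by omega)
    have := h.left
    omega
  have h3 : ¬b < b' := fun hlt => by
    have := h'.pass b (by omega) hlt
    have := h.right
    omega
  have h4 : ¬b' < b := fun hlt => by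
    have := h.pass b' (by omega) hlt
    have := h'.right
    omega
  omega

lemma patternMatrix_of_isChain {a b : ℕ} (hab : a < b) (hb : b < r) (hch : IsChain L P a b) :
    patternMatrix r ξ L P a b = 1 := by
  simp [patternMatrix, hab.ne, hab, hb, hch]

lemma patternMatrix_eq_zero {a b : ℕ} (h : ¬(a ≤ b ∧ b < r)) : patternMatrix r ξ L P a b = 0 := by
  unfold patternMatrix
  rw [if_neg (by omega), if_neg (by omega)]

lemma patternMatrix_of_not_isChain {a b : ℕ} (hab : a < b) (hch : ¬IsChain L P a b) :
    patternMatrix r ξ L P a b = 0 := by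
  simp [patternMatrix, hab.ne, hch]

variable (hLP : IsCrossingPattern r ξ L P)
include hLP

lemma IsCrossingPattern.exists_isChain {t : ℕ} (ht : L t = 1) :
    ∃ a b, a < t ∧ t ≤ b ∧ b < r ∧ IsChain L P a b := by
  have ht0 : 0 < t := Nat.pos_of_ne_zero fun h => by simp [h, hLP.zero] at ht
  have htr : t < r := by
    by_contra h
    have := hLP.eq_zero_of_le t (by omega)
    omega
  have hP : ∀ u, P u ≠ 0 → P u = 1 ∧ L u = 1 ∧ L (u + 1) = 1 := fun u hu => by
    have := hLP.passing_le u
    have := hLP.le_one u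
    have := hLP.le_one (u + 1)
    omega
  set a := Nat.findGreatest (fun x => P x = 0) (t - 1)
  have hPa : P a = 0 := Nat.findGreatest_spec (P := fun x => P x = 0) (m := 0) (Nat.zero_le _)
    (by have := (hLP.passing_le 0).1; rw [hLP.zero] at this; omega)
  have hat : a ≤ t - 1 := Nat.findGreatest_le _
  have hleft : ∀ u, a < u → u ≤ t - 1 → P u ≠ 0 := fun u h1 h2 =>
    Nat.findGreatest_is_greatest (P := fun x => P x = 0) h1 h2
  have hPlast : P (r - 1) = 0 := by
    have := (hLP.passing_le (r - 1)).2
    rw [Nat.sub_add_cancel (by omega), hLP.eq_zero_of_le r le_rfl] at this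
    omega
  have hex : ∃ y, t ≤ y ∧ P y = 0 := ⟨r - 1, by omega, hPlast⟩
  set b := Nat.find hex
  have hb : t ≤ b ∧ P b = 0 := Nat.find_spec hex
  have hbr : b ≤ r - 1 := Nat.find_min' hex ⟨by omega, hPlast⟩
  have hright : ∀ u, t ≤ u → u < b → P u ≠ 0 := fun u h1 h2 h3 => Nat.find_min hex h2 ⟨h1, h3⟩
  refine ⟨a, b, by omega, hb.1, by omega, ⟨fun g hag hgb => ?_, hPa, hb.2, fun u hau hub => ?_⟩⟩
  · rcases lt_trichotomy g t with hgt | rfl | hgt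
    · exact (hP g (hleft g hag (by omega))).2.1
    · exact ht
    · have := (hP (g - 1) (hright (g - 1) (by omega) (by omega))).2.2
      rwa [Nat.sub_add_cancel (by omega)] at this
  · rcases lt_or_ge u t with hut | hut
    · exact (hP u (hleft u hau (by omega))).1
    · exact (hP u (hright u hut hub)).1

lemma IsCrossingPattern.crossing_patternMatrix (t : ℕ) :
    crossing r (patternMatrix r ξ L P) t = L t := by
  have hLt := hLP.le_one t
  rw [crossing, ← sum_product']
  rcases Nat.lt_or_ge (L t) 1 with h0 | h1
  · refine (sum_eq_zero fun p hp => ?_).trans (by omega)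
    simp only [mem_product, mem_range, mem_Ico] at hp
    refine patternMatrix_of_not_isChain (by omega) fun hch => ?_
    have := hch.crossing t (by omega) (by omega)
    omega
  · obtain ⟨a, b, hat, htb, hbr, hch⟩ := hLP.exists_isChain (t := t) (by omega)
    rw [sum_eq_single_of_mem (a, b) (by simp only [mem_product, mem_range, mem_Ico]; omega),
      patternMatrix_of_isChain (by omega) hbr hch]
    · omega
    · rintro ⟨a', b'⟩ hp hne
      simp only [mem_product, mem_range, mem_Ico] at hp
      refine patternMatrix_of_not_isChain (by omega) fun hch' => hne ?_
      obtain ⟨rfl, rfl⟩ := hch'.unique hch (g := t) (by omega) (by omega)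
      rfl

lemma IsCrossingPattern.passing_patternMatrix (t : ℕ) :
    passing r (patternMatrix r ξ L P) t = P t := by
  have hPt := hLP.passing_le t
  have := hLP.le_one t
  rcases Nat.lt_or_ge (P t) 1 with h0 | h1
  · refine (sum_eq_zero fun a ha => sum_eq_zero fun b hb => ?_).trans (by omega)
    simp only [mem_range, mem_Ico] at ha hb
    refine patternMatrix_of_not_isChain (by omega) fun hch => ?_
    have := hch.pass t ha (by omega)
    omega
  · obtain ⟨a, b, hat, htb, hbr, hch⟩ := hLP.exists_isChain (t := t) (by omega)
    have htb' : t < b := lt_of_le_of_ne htb fun h => by have := hch.right; subst h; omega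
    have hge : patternMatrix r ξ L P a b ≤ passing r (patternMatrix r ξ L P) t :=
      le_sum_sum (by simp only [mem_range]; omega) (by simp only [mem_Ico]; omega)
    have hle := passing_le_crossing (r := r) (n := patternMatrix r ξ L P) t
    rw [patternMatrix_of_isChain (by omega) hbr hch] at hge
    rw [hLP.crossing_patternMatrix] at hle
    omega

lemma IsCrossingPattern.coverage_patternMatrix (hpos : ∀ t < r, 1 ≤ ξ t) {t : ℕ} (ht : t < r) :
    coverage r (patternMatrix r ξ L P) t = ξ t := by
  have h := coverage_add_passing (n := patternMatrix r ξ L P) ht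
  rw [hLP.crossing_patternMatrix, hLP.crossing_patternMatrix, hLP.passing_patternMatrix] at h
  simp only [patternMatrix, and_self, ht, if_true] at h
  have := hLP.le_one t
  have := hLP.le_one (t + 1)
  have := hpos t ht
  rcases le_or_gt (ξ t) 1 with hξ | hξ
  · have := hLP.forced t hξ
    omega
  · omega

lemma IsCrossingPattern.isIntervalDecomp (hpos : ∀ t < r, 1 ≤ ξ t) {k : ℕ}
    (hk : k + ∑ t ∈ range r, L t = ∑ t ∈ range r, ξ t) :
    IsIntervalDecomp r ξ k (patternMatrix r ξ L P) where
  support _ _ := patternMatrix_eq_zero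
  coverage_eq _ ht := hLP.coverage_patternMatrix hpos ht
  size_eq := by
    have h := sum_coverage (r := r) (n := patternMatrix r ξ L P) fun _ _ => patternMatrix_eq_zero
    rw [sum_congr rfl fun t ht => hLP.coverage_patternMatrix hpos (mem_range.mp ht)] at h
    simp only [hLP.crossing_patternMatrix] at h
    omega

end PatternToDecomp

noncomputable def intervalDecompEquiv {r : ℕ} {ξ : ℕ → ℕ} (hpos : ∀ t < r, 1 ≤ ξ t)
    (hadj : ∀ t, t + 1 < r → ξ t ≤ 1 ∨ ξ (t + 1) ≤ 1) (k : ℕ) :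
    {n // IsIntervalDecomp r ξ k n} ≃
      {LP : (ℕ → ℕ) × (ℕ → ℕ) // IsCrossingPattern r ξ LP.1 LP.2 ∧
        k + ∑ t ∈ range r, LP.1 t = ∑ t ∈ range r, ξ t} where
  toFun n := ⟨(crossing r n.1, passing r n.1),
    isCrossingPattern_of_decomp hadj n.2, n.2.add_sum_crossing⟩
  invFun LP := ⟨patternMatrix r ξ LP.1.1 LP.1.2, LP.2.1.isIntervalDecomp hpos LP.2.2⟩
  left_inv n := Subtype.ext (patternMatrix_crossing_passing hadj n.2)
  right_inv LP := Subtype.ext (Prod.ext (funext LP.2.1.crossing_patternMatrix)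
    (funext LP.2.1.passing_patternMatrix))

def xi (I : Finset ℕ) (c : ℕ → ℕ) (t : ℕ) : ℕ := if t + 1 ∈ I then 1 + c (t + 1) else 1

/- The state at position `t` records the part of `(L, P)` that `t` owns: `(L t, L (t + 1), P t)`
when `t + 1 ∈ I`, nothing when `t = 0` or `t ∈ I` (then `L t` is `0` or recorded at `t - 1`), and
`L t` otherwise. `localWeight` counts the owned boundaries that are not crossed. -/
def localStates (I : Finset ℕ) (t : ℕ) : Finset (ℕ × ℕ × ℕ) :=
  if t + 1 ∈ I then (range 2 ×ˢ range 2 ×ˢ range 2).filter fun v => v.2.2 ≤ v.1 ∧ v.2.2 ≤ v.2.1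
  else if t = 0 ∨ t ∈ I then {0}
  else range 2 ×ˢ {0}

def localWeight (I : Finset ℕ) (t : ℕ) (v : ℕ × ℕ × ℕ) : ℕ :=
  if t + 1 ∈ I then (1 - v.1) + (1 - v.2.1) else if t = 0 ∨ t ∈ I then 0 else 1 - v.1

def stateOf (I : Finset ℕ) (L P : ℕ → ℕ) (t : ℕ) : ℕ × ℕ × ℕ :=
  if t + 1 ∈ I then (L t, L (t + 1), P t) else if t = 0 ∨ t ∈ I then 0 else (L t, 0)

def crossingOfStates (r : ℕ) (I : Finset ℕ) (x : Fin r → ℕ × ℕ × ℕ) (t : ℕ) : ℕ :=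
  if h : t < r then (if t ∈ I then (x ⟨t - 1, by omega⟩).2.1 else (x ⟨t, h⟩).1) else 0

def passingOfStates (r : ℕ) (I : Finset ℕ) (x : Fin r → ℕ × ℕ × ℕ) (t : ℕ) : ℕ :=
  if h : t < r ∧ t + 1 ∈ I then (x ⟨t, h.1⟩).2.2
  else min (crossingOfStates r I x t) (crossingOfStates r I x (t + 1))

lemma sum_localStates (I : Finset ℕ) (t : ℕ) :
    ∑ v ∈ localStates I t, (X : ℤ[X]) ^ localWeight I t v =
      if t + 1 ∈ I then 2 + 2 * X + X ^ 2 else if t = 0 ∨ t ∈ I then 1 else 1 + X := by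
  unfold localStates localWeight
  split_ifs <;> simp [sum_filter, sum_product, sum_range_succ] <;> ring

lemma le_one_of_mem_localStates {I : Finset ℕ} {t : ℕ} {v : ℕ × ℕ × ℕ}
    (hv : v ∈ localStates I t) : v.1 ≤ 1 ∧ v.2.1 ≤ 1 ∧ v.2.2 ≤ v.1 ∧ v.2.2 ≤ v.2.1 := by
  unfold localStates at hv
  split_ifs at hv
  · simp only [mem_filter, mem_product, mem_range] at hv
    omega
  · simp [mem_singleton.mp hv]
  · simp only [mem_product, mem_range, mem_singleton] at hv
    simp [hv.2]
    omega

lemma eq_zero_of_mem_localStates {I : Finset ℕ} {t : ℕ} {v : ℕ × ℕ × ℕ}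
    (hv : v ∈ localStates I t) (ht : t + 1 ∉ I) : v.2 = 0 ∧ (t = 0 ∨ t ∈ I → v.1 = 0) := by
  unfold localStates at hv
  rw [if_neg ht] at hv
  split_ifs at hv with h
  · simp [mem_singleton.mp hv]
  · simp only [mem_product, mem_range, mem_singleton] at hv
    exact ⟨hv.2, fun h' => absurd h' h⟩

lemma stateOf_mem_localStates {r : ℕ} {I : Finset ℕ} {ξ L P : ℕ → ℕ}
    (hLP : IsCrossingPattern r ξ L P) (t : ℕ) : stateOf I L P t ∈ localStates I t := by
  have := hLP.le_one t
  have := hLP.le_one (t + 1)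
  have := hLP.passing_le t
  unfold stateOf localStates
  split_ifs <;> simp <;> omega

lemma coeff_sum_X_pow {R α : Type*} [Semiring R] (s : Finset α) (e : α → ℕ) (k : ℕ) :
    (∑ a ∈ s, (X : R[X]) ^ e a).coeff k = #(s.filter fun a => e a = k) := by
  simp [finsetSum_coeff, coeff_X_pow, sum_boole, eq_comm]

section Nonconsecutive

variable {r : ℕ} {I : Finset ℕ} {c : ℕ → ℕ}
  (hI : ∀ i ∈ I, 1 < i ∧ i < r) (hnc : ∀ i ∈ I, ∀ j ∈ I, i < j → i + 2 ≤ j)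

lemma xi_pos (t : ℕ) : 1 ≤ xi I c t := by
  unfold xi
  split_ifs <;> omega

include hnc in
lemma succ_notMem_of_mem {t : ℕ} (ht : t ∈ I) : t + 1 ∉ I := fun h => by
  have := hnc t ht (t + 1) h (by omega)
  omega

include hnc in
lemma xi_adj (t : ℕ) : xi I c t ≤ 1 ∨ xi I c (t + 1) ≤ 1 := by
  unfold xi
  by_cases h : t + 1 ∈ I
  · simp [succ_notMem_of_mem hnc h]
  · simp [h]

lemma xi_le_one_iff (hc : ∀ i ∈ I, 1 ≤ c i) {t : ℕ} : xi I c t ≤ 1 ↔ t + 1 ∉ I := by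
  unfold xi
  by_cases h : t + 1 ∈ I
  · have := hc _ h
    simp only [h, if_true, not_true_eq_false, iff_false]
    omega
  · simp [h]

include hI in
lemma sum_xi : ∑ t ∈ range r, xi I c t = r + ∑ i ∈ I, c i := by
  have h : ∀ t, xi I c t = 1 + if t + 1 ∈ I then c (t + 1) else 0 := fun t => by
    unfold xi
    split_ifs <;> rfl
  simp only [h, sum_add_distrib, sum_const, card_range, smul_eq_mul, mul_one, ← sum_filter]
  congr 1
  refine sum_nbij' (· + 1) (· - 1) (fun t ht => (mem_filter.mp ht).2) (fun i hi => ?_)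
    (fun t _ => rfl) (fun i hi => Nat.sub_add_cancel (hI i hi).1.le) fun _ _ => rfl
  have := hI i hi
  simp only [mem_filter, mem_range, Nat.sub_add_cancel this.1.le]
  exact ⟨by omega, hi⟩

include hI hnc in
lemma crossingOfStates_of_succ_mem {x : Fin r → ℕ × ℕ × ℕ} {t : ℕ} (h : t + 1 ∈ I) :
    crossingOfStates r I x t = (x ⟨t, by have := hI _ h; omega⟩).1 ∧
      crossingOfStates r I x (t + 1) = (x ⟨t, by have := hI _ h; omega⟩).2.1 := by
  have := hI _ h
  have ht : t ∉ I := fun h' => succ_notMem_of_mem hnc h' h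
  simp [crossingOfStates, ht, h, show t < r by omega, show t + 1 < r by omega]

omit hI in
lemma crossingOfStates_le_one {x : Fin r → ℕ × ℕ × ℕ} (hx : ∀ t : Fin r, x t ∈ localStates I t)
    (t : ℕ) : crossingOfStates r I x t ≤ 1 := by
  unfold crossingOfStates
  split_ifs
  · exact (le_one_of_mem_localStates (hx _)).2.1
  · exact (le_one_of_mem_localStates (hx _)).1
  · exact Nat.zero_le _

include hI hnc in
lemma isCrossingPattern_ofStates (hc : ∀ i ∈ I, 1 ≤ c i) (hr : 0 < r)
    {x : Fin r → ℕ × ℕ × ℕ} (hx : ∀ t : Fin r, x t ∈ localStates I t) :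
    IsCrossingPattern r (xi I c) (crossingOfStates r I x) (passingOfStates r I x) where
  le_one := crossingOfStates_le_one hx
  zero := by
    have h0 : (0 : ℕ) ∉ I := fun h => by have := hI 0 h; omega
    have h1 : (0 : ℕ) + 1 ∉ I := fun h => by have := hI 1 h; omega
    simp only [crossingOfStates, hr, h0, dif_pos, if_false]
    exact (eq_zero_of_mem_localStates (hx ⟨0, hr⟩) h1).2 (Or.inl rfl)
  eq_zero_of_le t ht := dif_neg (by omega)
  passing_le t := by
    unfold passingOfStates
    split_ifs with h
    · rw [(crossingOfStates_of_succ_mem hI hnc h.2).1, (crossingOfStates_of_succ_mem hI hnc h.2).2]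
      exact (le_one_of_mem_localStates (hx _)).2.2
    · omega
  forced t hξ := by
    have := crossingOfStates_le_one hx t
    have := crossingOfStates_le_one hx (t + 1)
    rw [passingOfStates, dif_neg fun h => (xi_le_one_iff hc).mp hξ h.2]
    omega

include hI in
lemma crossingOfStates_stateOf {L P : ℕ → ℕ} {ξ : ℕ → ℕ} (hLP : IsCrossingPattern r ξ L P) :
    crossingOfStates r I (fun t : Fin r => stateOf I L P t) = L := by
  funext t
  unfold crossingOfStates
  split_ifs with htr htI
  · have := hI t htI
    simp [stateOf, Nat.sub_add_cancel (show 1 ≤ t by omega), htI]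
  · change (stateOf I L P t).1 = L t
    unfold stateOf
    split_ifs with h1 h2
    · rfl
    · simp only [htI, or_false] at h2
      simp [h2, hLP.zero]
    · rfl
  · exact (hLP.eq_zero_of_le t (by omega)).symm

include hI in
lemma passingOfStates_stateOf (hc : ∀ i ∈ I, 1 ≤ c i) {L P : ℕ → ℕ}
    (hLP : IsCrossingPattern r (xi I c) L P) :
    passingOfStates r I (fun t : Fin r => stateOf I L P t) = P := by
  funext t
  unfold passingOfStates
  split_ifs with h
  · simp [stateOf, h.2]
  · rw [crossingOfStates_stateOf hI hLP]
    have hξ : xi I c t ≤ 1 := (xi_le_one_iff hc).mpr fun h' => h ⟨by have := hI _ h'; omega, h'⟩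
    have := hLP.forced t hξ
    have := hLP.passing_le t
    omega

include hI hnc in
lemma stateOf_ofStates {x : Fin r → ℕ × ℕ × ℕ} (hx : ∀ t : Fin r, x t ∈ localStates I t)
    (t : Fin r) : stateOf I (crossingOfStates r I x) (passingOfStates r I x) t = x t := by
  unfold stateOf
  split_ifs with h1 h2
  · rw [(crossingOfStates_of_succ_mem hI hnc h1).1, (crossingOfStates_of_succ_mem hI hnc h1).2]
    simp [passingOfStates, h1]
  · have := eq_zero_of_mem_localStates (hx t) h1
    exact Prod.ext (this.2 h2).symm this.1.symm
  · have := eq_zero_of_mem_localStates (hx t) h1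
    simp only [not_or] at h2
    simp [crossingOfStates, h2.2, ← this.1]

include hI hnc in
lemma sum_localWeight_stateOf {ξ L P : ℕ → ℕ} (hLP : IsCrossingPattern r ξ L P) (hr : 0 < r) :
    ∑ t ∈ range r, localWeight I t (stateOf I L P t) + ∑ t ∈ range r, L t + 1 = r := by
  set g : ℕ → ℕ := fun t => if t ∈ I then 1 - L t else 0
  have hlocal : ∀ t ∈ range r, localWeight I t (stateOf I L P t) + L t + g t =
      (if t = 0 then 0 else 1) + g (t + 1) := by
    intro t _
    have := hLP.le_one t
    have h0 : (0 : ℕ) ∉ I := fun h => by have := hI 0 h; omega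
    by_cases h1 : t + 1 ∈ I
    · have := hI _ h1
      have h2 : t ∉ I := fun h => succ_notMem_of_mem hnc h h1
      simp [localWeight, stateOf, g, h1, h2, show t ≠ 0 by omega]
      omega
    · by_cases h2 : t ∈ I
      · have := hI _ h2
        simp [localWeight, g, h1, h2, show t ≠ 0 by omega]
        omega
      · by_cases h3 : t = 0
        · subst h3
          simp [localWeight, g, h1, h0, hLP.zero]
        · simp [localWeight, stateOf, g, h1, h2, h3]
          omega
  have hshift : ∑ t ∈ range r, g (t + 1) = ∑ t ∈ range r, g t := by
    have h := sum_range_succ' g r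
    rw [sum_range_succ] at h
    have : g r = 0 := if_neg fun h => by have := hI r h; omega
    have : g 0 = 0 := if_neg fun h => by have := hI 0 h; omega
    omega
  have hones : ∑ t ∈ range r, (if t = 0 then 0 else 1) + 1 = r := by
    obtain ⟨s, rfl⟩ : ∃ s, r = s + 1 := ⟨r - 1, by omega⟩
    simp [sum_range_succ']
  have := sum_congr rfl hlocal
  simp only [sum_add_distrib] at this
  omega

include hI hnc in
lemma sum_localWeight_ofStates (hc : ∀ i ∈ I, 1 ≤ c i) (hr : 0 < r) {x : Fin r → ℕ × ℕ × ℕ}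
    (hx : ∀ t : Fin r, x t ∈ localStates I t) :
    ∑ t : Fin r, localWeight I t (x t) + ∑ t ∈ range r, crossingOfStates r I x t + 1 = r := by
  have h := sum_localWeight_stateOf hI hnc (isCrossingPattern_ofStates hI hnc hc hr hx) hr
  rw [← Fin.sum_univ_eq_sum_range (fun t => localWeight I t (stateOf I _ _ t))] at h
  simpa only [stateOf_ofStates hI hnc hx] using h

noncomputable def patternEquivStates (hc : ∀ i ∈ I, 1 ≤ c i) (hr : 0 < r) (k : ℕ) :
    {LP : (ℕ → ℕ) × (ℕ → ℕ) // IsCrossingPattern r (xi I c) LP.1 LP.2 ∧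
        k + ∑ t ∈ range r, LP.1 t = ∑ t ∈ range r, xi I c t} ≃
      {x : Fin r → ℕ × ℕ × ℕ // x ∈ (Fintype.piFinset fun t : Fin r => localStates I t).filter
        fun x => ∑ i ∈ I, c i + 1 + ∑ t : Fin r, localWeight I t (x t) = k} where
  toFun LP := ⟨fun t => stateOf I LP.1.1 LP.1.2 t, by
    have h := sum_localWeight_stateOf hI hnc LP.2.1 hr
    have hk := LP.2.2.trans (sum_xi hI)
    rw [mem_filter, Fintype.mem_piFinset,
      Fin.sum_univ_eq_sum_range (fun t => localWeight I t (stateOf I LP.1.1 LP.1.2 t))]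
    exact ⟨fun t => stateOf_mem_localStates LP.2.1 t, by omega⟩⟩
  invFun x := ⟨(crossingOfStates r I x.1, passingOfStates r I x.1), by
    obtain ⟨hmem, hk⟩ := mem_filter.mp x.2
    have hx := Fintype.mem_piFinset.mp hmem
    have h := sum_localWeight_ofStates hI hnc hc hr hx
    refine ⟨isCrossingPattern_ofStates hI hnc hc hr hx, ?_⟩
    dsimp only
    rw [sum_xi hI]
    omega⟩
  left_inv LP := Subtype.ext (Prod.ext (crossingOfStates_stateOf hI LP.2.1)
    (passingOfStates_stateOf hI hc LP.2.1))
  right_inv x := Subtype.ext (funext (stateOf_ofStates hI hnc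
    (Fintype.mem_piFinset.mp (mem_filter.mp x.2).1)))

include hI in
lemma card_filter_succ_mem : #((range r).filter (· + 1 ∈ I)) = #I := by
  refine card_nbij' (· + 1) (· - 1) (fun t ht => (mem_filter.mp ht).2) (fun i hi => ?_)
    (fun t _ => rfl) fun i hi => Nat.sub_add_cancel (hI i hi).1.le
  have := hI i hi
  simp only [coe_filter, mem_range, Set.mem_ofPred_eq, Nat.sub_add_cancel this.1.le]
  exact ⟨by omega, hi⟩

include hI hnc in
lemma filter_range_zero_or_mem (hr : 0 < r) :
    (range r).filter (fun t => t + 1 ∉ I ∧ (t = 0 ∨ t ∈ I)) = insert 0 I := by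
  ext t
  simp only [mem_filter, mem_range, mem_insert]
  constructor
  · exact fun h => h.2.2
  · rintro (rfl | h)
    · exact ⟨hr, fun h => by have := hI 1 h; omega, Or.inl rfl⟩
    · have := hI t h
      exact ⟨by omega, succ_notMem_of_mem hnc h, Or.inr h⟩

include hI hnc in
lemma prod_sum_localStates (hr : 0 < r) :
    ∏ t : Fin r, ∑ v ∈ localStates I t, (X : ℤ[X]) ^ localWeight I t v =
      (1 + X) ^ (r - 1 - 2 * #I) * (2 + 2 * X + X ^ 2) ^ #I := by
  rw [Fin.prod_univ_eq_prod_range (fun t => ∑ v ∈ localStates I t, (X : ℤ[X]) ^ localWeight I t v)]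
  simp only [sum_localStates]
  rw [prod_ite, prod_const, prod_ite, prod_const, prod_const, one_pow, one_mul, filter_filter,
    card_filter_succ_mem hI, mul_comm]
  have h0 : (0 : ℕ) ∉ I := fun h => by have := hI 0 h; omega
  have hbig := card_filter_add_card_filter_not (s := range r) (fun t => t + 1 ∈ I)
  have hrest := card_filter_add_card_filter_not
    (s := (range r).filter (fun t => t + 1 ∉ I)) (fun t => t = 0 ∨ t ∈ I)
  rw [filter_filter, filter_filter, filter_range_zero_or_mem hI hnc hr, card_insert_of_notMem h0]
    at hrest
  rw [card_range, card_filter_succ_mem hI] at hbig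
  congr 2
  omega

include hI hnc in
lemma coeff_eq_card_states (hr : 0 < r) (m k : ℕ) :
    ((X : ℤ[X]) ^ (m + 1) * (1 + X) ^ (r - 1 - 2 * #I) * (2 + 2 * X + X ^ 2) ^ #I).coeff k =
      (#((Fintype.piFinset fun t : Fin r => localStates I t).filter
        fun x : Fin r → ℕ × ℕ × ℕ => m + 1 + ∑ t : Fin r, localWeight I t (x t) = k) : ℤ) := by
  rw [mul_assoc, ← prod_sum_localStates hI hnc hr, prod_univ_sum, mul_sum]
  simp only [prod_pow_eq_pow_sum, ← pow_add]
  exact coeff_sum_X_pow _ _ k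

end Nonconsecutive

end TypeA

/-- Proposition 3.2: for `ξ = Σ α_i + Σ_j c_{i_j} α_{i_j}` with `I = {i_1 < ⋯ < i_ℓ}`
nonconsecutive, `1 < i_1`, `i_ℓ < r`, and positive coefficients `c`,
`℘_q(ξ) = q^{m+1} (1+q)^{r−1−2ℓ} (2+2q+q²)^ℓ` where `m = Σ_j c_{i_j}`. -/
theorem qAnalog_nonconsecutive_multiplicity_typeA (r ℓ : ℕ) (hr : 3 ≤ r)
    (I : Finset ℕ) (hcard : I.card = ℓ)
    (hI : ∀ i ∈ I, 1 < i ∧ i < r)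
    (hnc : ∀ i ∈ I, ∀ j ∈ I, i < j → i + 2 ≤ j)
    (c : ℕ → ℕ) (hc : ∀ i ∈ I, 1 ≤ c i)
    (m : ℕ) (hm : m = ∑ i ∈ I, c i)
    (ξ : Fin r → ℕ)
    (hξ : ξ = fun t => if t.val + 1 ∈ I then 1 + c (t.val + 1) else 1) :
    ∀ k : ℕ, (NA r k ξ : ℤ) =
      ((X : ℤ[X]) ^ (m + 1) * (1 + X) ^ (r - 1 - 2 * ℓ) *
        (2 + 2 * X + X ^ 2) ^ ℓ).coeff k := by
  intro k
  subst hcard hm hξ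
  have hr0 : 0 < r := by omega
  have hcount := TypeA.NA_eq_card r k (TypeA.xi I c)
  rw [Nat.card_congr ((TypeA.intervalDecompEquiv (fun t _ => TypeA.xi_pos t)
    (fun t _ => TypeA.xi_adj hnc t) k).trans (TypeA.patternEquivStates hI hnc hc hr0 k)),
    Nat.card_eq_finsetCard] at hcount
  rw [TypeA.coeff_eq_card_states hI hnc hr0]
  exact_mod_cast hcount
end

section
/- Fix ℓ ≥ 0 and m ≥ ℓ. For r ≥ 2ℓ+1 define g_r : ℝ_{>0} → ℝ by g_r(y) = y^{m+1}·(1+y)^{r−1−2ℓ}·(2+2y+y²)^ℓ, and set μ_r = (r+1)/2 − ℓ/5 + m and σ_r = √((r−1)/4 + 3ℓ/50). Then for every t ∈ ℝ: lim_{r→∞} [ log g_r(e^{t/σ_r}) − log g_r(1) − t·μ_r/σ_r ] = t²/2. -/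
open Filter

/-- `gGen ℓ m r y = y^{m+1} (1+y)^{r−1−2ℓ} (2+2y+y²)^ℓ`, the q-analog of Kostant's
partition function evaluated at `q = y` for the weight
`λ = Σ α_i + Σ_j c_{i_j} α_{i_j}` of a classical Lie algebra of rank `r`. -/
noncomputable def gGen (ℓ m r : ℕ) (y : ℝ) : ℝ :=
  y ^ (m + 1) * (1 + y) ^ (r - 1 - 2 * ℓ) * (2 + 2 * y + y ^ 2) ^ ℓ

/-- The mean `μ_r = (r+1)/2 − ℓ/5 + m`. -/
noncomputable def muGen (ℓ m r : ℕ) : ℝ := ((r : ℝ) + 1) / 2 - (ℓ : ℝ) / 5 + (m : ℝ)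

/-- The standard deviation `σ_r = √((r−1)/4 + 3ℓ/50)`. -/
noncomputable def sigmaGen (ℓ r : ℕ) : ℝ :=
  Real.sqrt (((r : ℝ) - 1) / 4 + 3 * (ℓ : ℝ) / 50)

section Aux
open Filter Real

lemma aux_sinh : Tendsto (fun u : ℝ => Real.sinh u / u) (nhdsWithin 0 {x | x ≠ 0}) (nhds 1) := by
  have h := (Real.hasDerivAt_sinh 0)
  rw [hasDerivAt_iff_tendsto_slope] at h
  have he : slope Real.sinh 0 = fun u : ℝ => Real.sinh u / u := by
    ext u; simp [slope_def_field]
  rw [he, Set.compl_singleton_eq] at h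
  simpa using h

lemma aux_log : Tendsto (fun y : ℝ => Real.log y / (y - 1)) (nhdsWithin 1 {x | x ≠ 1}) (nhds 1) := by
  have h := (Real.hasDerivAt_log one_ne_zero)
  rw [hasDerivAt_iff_tendsto_slope] at h
  have he : slope Real.log 1 = fun y : ℝ => Real.log y / (y - 1) := by
    ext u; simp [slope_def_field]
  rw [he, Set.compl_singleton_eq] at h
  simpa using h

lemma aux_cosh_sub_one : Tendsto (fun u : ℝ => (Real.cosh u - 1) / u ^ 2)
    (nhdsWithin 0 {x | x ≠ 0}) (nhds (1/2)) := by
  -- (cosh u - 1)/u² = (1/2) * (sinh(u/2)/(u/2))²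
  have hhalf : Tendsto (fun u : ℝ => u / 2) (nhdsWithin 0 {x | x ≠ 0})
      (nhdsWithin 0 {x | x ≠ 0}) := by
    rw [tendsto_nhdsWithin_iff]
    constructor
    · have hb : Tendsto (fun u : ℝ => u / 2) (nhds 0) (nhds 0) := by
        simpa using (continuous_id.div_const (2:ℝ)).tendsto 0
      exact hb.mono_left nhdsWithin_le_nhds
    · filter_upwards [self_mem_nhdsWithin] with x hx
      simpa using div_ne_zero hx two_ne_zero
  have h1 : Tendsto (fun u : ℝ => (1:ℝ)/2 * (Real.sinh (u/2) / (u/2)) ^ 2)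
      (nhdsWithin 0 {x | x ≠ 0}) (nhds (1/2)) := by
    have := ((aux_sinh.comp hhalf).pow 2).const_mul ((1:ℝ)/2)
    simpa using this
  apply h1.congr'
  filter_upwards [self_mem_nhdsWithin] with u hu
  have hu' : (u : ℝ) ≠ 0 := hu
  have hc : Real.cosh u = 1 + 2 * Real.sinh (u/2) ^ 2 := by
    have := Real.cosh_two_mul (u/2)
    have h2 : 2 * (u/2) = u := by ring
    rw [h2] at this
    rw [this, Real.cosh_sq]; ring
  rw [hc]
  field_simp
  ring

lemma aux_logcosh : Tendsto (fun u : ℝ => Real.log (Real.cosh u) / u ^ 2)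
    (nhdsWithin 0 {x | x ≠ 0}) (nhds (1/2)) := by
  have hcoshto : Tendsto (fun u : ℝ => Real.cosh u) (nhdsWithin 0 {x | x ≠ 0})
      (nhdsWithin 1 {x | x ≠ 1}) := by
    rw [tendsto_nhdsWithin_iff]
    constructor
    · have : ContinuousAt Real.cosh 0 := Real.continuous_cosh.continuousAt
      simpa [Real.cosh_zero] using this.tendsto.mono_left nhdsWithin_le_nhds
    · filter_upwards [self_mem_nhdsWithin] with x hx
      exact ne_of_gt (Real.one_lt_cosh.2 hx)
  have h1 : Tendsto (fun u : ℝ => (Real.log (Real.cosh u) / (Real.cosh u - 1)) *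
      ((Real.cosh u - 1) / u ^ 2)) (nhdsWithin 0 {x | x ≠ 0}) (nhds (1 * (1/2))) :=
    (aux_log.comp hcoshto).mul aux_cosh_sub_one
  rw [one_mul] at h1
  apply h1.congr'
  filter_upwards [self_mem_nhdsWithin] with u hu
  have h2 : Real.cosh u - 1 ≠ 0 := sub_ne_zero.2 (ne_of_gt (Real.one_lt_cosh.2 hu))
  field_simp

lemma aux_logcosh_half : Tendsto (fun u : ℝ => Real.log (Real.cosh (u/2)) / u ^ 2)
    (nhdsWithin 0 {x | x ≠ 0}) (nhds (1/8)) := by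
  have hhalf : Tendsto (fun u : ℝ => u / 2) (nhdsWithin 0 {x | x ≠ 0})
      (nhdsWithin 0 {x | x ≠ 0}) := by
    rw [tendsto_nhdsWithin_iff]
    constructor
    · have hb : Tendsto (fun u : ℝ => u / 2) (nhds 0) (nhds 0) := by
        simpa using (continuous_id.div_const (2:ℝ)).tendsto 0
      exact hb.mono_left nhdsWithin_le_nhds
    · filter_upwards [self_mem_nhdsWithin] with x hx
      simpa using div_ne_zero hx two_ne_zero
  have h1 := (aux_logcosh.comp hhalf).const_mul ((1:ℝ)/4)
  have h2 : (1:ℝ)/4 * (1/2) = 1/8 := by norm_num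
  rw [h2] at h1
  apply h1.congr'
  filter_upwards [self_mem_nhdsWithin] with u hu
  have hu' : (u:ℝ) ≠ 0 := hu
  show (1:ℝ)/4 * (Real.log (Real.cosh (u/2)) / (u/2)^2) = _
  field_simp
  ring

end Aux

/-- Proposition 3.7: the logarithm of the moment generating function of the normalized
number of positive roots used in the decompositions of `λ` converges to `t²/2` as
`r → ∞`, i.e. `log g_r(e^{t/σ_r}) − log g_r(1) − tμ_r/σ_r → t²/2`. -/
theorem logMGF_limit_nonconsecutive (ℓ m : ℕ) (hm : ℓ ≤ m) (t : ℝ) :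
    Tendsto (fun r : ℕ =>
      Real.log (gGen ℓ m r (Real.exp (t / sigmaGen ℓ r))) - Real.log (gGen ℓ m r 1) -
        t * muGen ℓ m r / sigmaGen ℓ r)
      atTop (nhds (t ^ 2 / 2)) := by
  rcases eq_or_ne t 0 with rfl | ht
  · have : (fun r : ℕ =>
        Real.log (gGen ℓ m r (Real.exp (0 / sigmaGen ℓ r))) - Real.log (gGen ℓ m r 1) -
          0 * muGen ℓ m r / sigmaGen ℓ r) = fun _ => (0:ℝ) := by
      funext r; simp
    rw [this]
    simpa using (tendsto_const_nhds : Tendsto (fun _ : ℕ => (0:ℝ)) atTop (nhds 0))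
  -- notation
  set A : ℕ → ℝ := fun r => ((r : ℝ) - 1) / 4 + 3 * (ℓ : ℝ) / 50 with hA_def
  set s : ℕ → ℝ := fun r => t / sigmaGen ℓ r with hs_def
  -- A → ∞
  have hA : Tendsto A atTop atTop := by
    apply tendsto_atTop_add_const_right
    apply Tendsto.atTop_div_const (by norm_num : (0:ℝ) < 4)
    exact tendsto_atTop_add_const_right _ _ tendsto_natCast_atTop_atTop
  -- sqrt → ∞
  have hsqrt : Tendsto Real.sqrt atTop atTop := by
    apply tendsto_atTop_atTop_of_monotone (fun a b hab => Real.sqrt_le_sqrt hab)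
    intro b
    exact ⟨b ^ 2, by simpa [Real.sqrt_sq_eq_abs] using le_abs_self b⟩
  have hsig : Tendsto (fun r : ℕ => sigmaGen ℓ r) atTop atTop := by
    have : (fun r : ℕ => sigmaGen ℓ r) = Real.sqrt ∘ A := rfl
    rw [this]; exact hsqrt.comp hA
  -- eventually positivity
  have hsigpos : ∀ᶠ r : ℕ in atTop, 0 < sigmaGen ℓ r := hsig.eventually_gt_atTop 0
  have hApos : ∀ᶠ r : ℕ in atTop, 0 < A r := hA.eventually_gt_atTop 0
  -- s → 0 within ≠ 0
  have hs0 : Tendsto s atTop (nhds 0) := tendsto_const_nhds.div_atTop hsig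
  have hsne : Tendsto s atTop (nhdsWithin 0 {x | x ≠ 0}) := by
    rw [tendsto_nhdsWithin_iff]
    refine ⟨hs0, ?_⟩
    filter_upwards [hsigpos] with r hr
    exact div_ne_zero ht (ne_of_gt hr)
  -- N s² → 4 t²
  have hratio : Tendsto (fun r : ℕ => ((r:ℝ) - 1 - 2 * ℓ) / A r) atTop (nhds 4) := by
    have h1 : Tendsto (fun r : ℕ => 4 + (-2 * (ℓ:ℝ) - 6 * ℓ / 25) / A r) atTop (nhds 4) := by
      have := (tendsto_const_nhds (x := (-2 * (ℓ:ℝ) - 6 * ℓ / 25)) (f := atTop)).div_atTop hA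
      simpa using (tendsto_const_nhds (x := (4:ℝ))).add this
    apply h1.congr'
    filter_upwards [hApos] with r hr
    have hAne : A r ≠ 0 := ne_of_gt hr
    field_simp
    simp only [hA_def]
    ring
  have hNs2 : Tendsto (fun r : ℕ => ((r:ℝ) - 1 - 2 * ℓ) * (s r) ^ 2) atTop (nhds (4 * t ^ 2)) := by
    have h1 : Tendsto (fun r : ℕ => ((r:ℝ) - 1 - 2 * ℓ) / A r * t ^ 2) atTop (nhds (4 * t ^ 2)) :=
      hratio.mul_const _
    apply h1.congr'
    filter_upwards [hApos] with r hr
    have hAnn : (0:ℝ) ≤ A r := hr.le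
    have hsq : sigmaGen ℓ r ^ 2 = A r := Real.sq_sqrt hAnn
    have : (s r) ^ 2 = t ^ 2 / A r := by
      rw [hs_def]; simp only [div_pow, hsq]
    rw [this]; ring
  -- term 1
  have hterm1 : Tendsto (fun r : ℕ => ((r:ℝ) - 1 - 2 * ℓ) * Real.log (Real.cosh (s r / 2)))
      atTop (nhds (t ^ 2 / 2)) := by
    have h2 : Tendsto (fun r : ℕ => Real.log (Real.cosh (s r / 2)) / (s r) ^ 2)
        atTop (nhds (1/8)) := aux_logcosh_half.comp hsne
    have h3 := hNs2.mul h2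
    have h4 : 4 * t ^ 2 * (1/8) = t ^ 2 / 2 := by ring
    rw [h4] at h3
    apply h3.congr'
    filter_upwards [hsigpos] with r hr
    have hsr : s r ≠ 0 := div_ne_zero ht (ne_of_gt hr)
    have : (s r) ^ 2 ≠ 0 := pow_ne_zero _ hsr
    field_simp
  -- term 2
  have hterm2 : Tendsto (fun r : ℕ => (ℓ:ℝ) *
      (Real.log (2 + 2 * Real.exp (s r) + Real.exp (s r) ^ 2) - Real.log 5 - 4 * s r / 5))
      atTop (nhds 0) := by
    have hc : ContinuousAt (fun u : ℝ => (ℓ:ℝ) *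
        (Real.log (2 + 2 * Real.exp u + Real.exp u ^ 2) - Real.log 5 - 4 * u / 5)) 0 := by
      apply ContinuousAt.mul continuousAt_const
      apply ContinuousAt.sub
      apply ContinuousAt.sub
      · apply ContinuousAt.log
        · fun_prop
        · norm_num [Real.exp_zero]
      · exact continuousAt_const
      · fun_prop
    have h0 := hc.tendsto.comp hs0
    have hval : ((ℓ:ℝ) * (Real.log (2 + 2 * Real.exp (0:ℝ) + Real.exp (0:ℝ) ^ 2)
        - Real.log 5 - 4 * (0:ℝ) / 5)) = 0 := by
      norm_num [Real.exp_zero]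
    rw [← hval]
    exact h0
  have hsum := hterm1.add hterm2
  rw [add_zero] at hsum
  -- eventual equality with the original expression
  apply hsum.congr'
  filter_upwards [eventually_ge_atTop (2 * ℓ + 2)] with r hr
  have hfold : t / sigmaGen ℓ r = s r := rfl
  rw [hfold]
  have hr2 : (2:ℕ) ≤ r := by omega
  have hApos' : (0:ℝ) < A r := by
    have : (1:ℝ) ≤ (r:ℝ) - 1 := by
      have : (2:ℝ) ≤ (r:ℝ) := by exact_mod_cast hr2
      linarith
    have hl : (0:ℝ) ≤ 3 * (ℓ:ℝ) / 50 := by positivity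
    simp only [hA_def]; linarith
  have hσpos : 0 < sigmaGen ℓ r := Real.sqrt_pos.2 hApos'
  set u := s r with hu_def
  set σ := sigmaGen ℓ r
  have hy : Real.exp u > 0 := Real.exp_pos u
  set y := Real.exp u with hy_def
  have h1y : (0:ℝ) < 1 + y := by linarith
  have hq : (0:ℝ) < 2 + 2 * y + y ^ 2 := by positivity
  have hN : ((r - 1 - 2 * ℓ : ℕ) : ℝ) = (r:ℝ) - 1 - 2 * (ℓ:ℝ) := by
    rw [Nat.sub_sub, Nat.cast_sub (by omega : 1 + 2 * ℓ ≤ r)]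
    push_cast; ring
  -- log g(y)
  have hlog1 : Real.log (gGen ℓ m r y) =
      ((m:ℝ) + 1) * u + ((r:ℝ) - 1 - 2 * ℓ) * Real.log (1 + y)
        + (ℓ:ℝ) * Real.log (2 + 2 * y + y ^ 2) := by
    unfold gGen
    rw [Real.log_mul (by positivity) (by positivity),
        Real.log_mul (by positivity) (by positivity),
        Real.log_pow, Real.log_pow, Real.log_pow, hN]
    rw [hy_def, Real.log_exp]
    push_cast; ring
  have hlog2 : Real.log (gGen ℓ m r (1:ℝ)) =
      ((r:ℝ) - 1 - 2 * ℓ) * Real.log 2 + (ℓ:ℝ) * Real.log 5 := by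
    unfold gGen
    rw [one_pow, one_mul, show (1:ℝ) + 1 = 2 by norm_num,
        show (2:ℝ) + 2 * 1 + 1 ^ 2 = 5 by norm_num,
        Real.log_mul (by positivity) (by positivity), Real.log_pow, Real.log_pow, hN]
  -- log(1+y) = log cosh(u/2) + log 2 + u/2
  have hcosh : Real.log (1 + y) = Real.log (Real.cosh (u/2)) + Real.log 2 + u / 2 := by
    have hfac : 1 + y = Real.cosh (u/2) * (2 * Real.exp (u/2)) := by
      rw [Real.cosh_eq, hy_def]
      have h1 : Real.exp (u/2) * Real.exp (u/2) = Real.exp u := by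
        rw [← Real.exp_add]; norm_num
      have h2 : Real.exp (-(u/2)) * Real.exp (u/2) = 1 := by
        rw [← Real.exp_add]; simp
      linear_combination -h1 - h2
    rw [hfac, Real.log_mul (ne_of_gt (Real.cosh_pos _)) (by positivity),
        Real.log_mul (by norm_num) (ne_of_gt (Real.exp_pos _)), Real.log_exp]
    ring
  have hμσ : t * muGen ℓ m r / σ = u * muGen ℓ m r := by
    rw [hu_def, hs_def, mul_div_right_comm]
  rw [hlog1, hlog2, hcosh, hμσ]
  unfold muGen
  ring
end
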